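/- Let f and g be nonzero elements of the free right-symmetric algebra A that commute, i.e., fg = gf. Then g = cf for some scalar c ∈ k. Consequently, the centralizer of any nonzero element f of A equals the one-dimensional subspace kf. -/

import Mathlib

/-!
Every nonzero element of `A` has a leading good word. Using right symmetry one shows that the
product of good words `u`, `v` is a good word `u ∘ v` plus smaller good words, where `u ∘ v` is
obtained from `uv` by moving `v` to the left past every right factor larger than it. Since `∘`
is strictly monotone in each argument (for good words), the leading word of `fg` is
`lead f ∘ lead g`. Looking at the last right factor, `u ∘ v = v ∘ u` forces `u = v`, so
commuting `f`, `g` share their leading word `w`. Then `g - c f`, with `c` chosen to cancel the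
coefficient of `w`, still commutes with `f` but cannot have leading word `w`, so it is zero.
-/

namespace RS

/-- The degree of a nonassociative word. -/
def deg {X : Type*} : FreeMagma X → ℕ
  | .of _ => 1
  | .mul u v => deg u + deg v

/-- The order on nonassociative words: `u < v` if `d u < d v`; words of equal degree 1 are
compared in `X`; words `u = u₁u₂`, `v = v₁v₂` of equal degree `≥ 2` are compared
lexicographically. -/
def wlt {X : Type*} [LinearOrder X] : FreeMagma X → FreeMagma X → Prop
  | .of a, .of b => a < b
  | .of _, .mul _ _ => True
  | .mul _ _, .of _ => False
  | .mul u₁ u₂, .mul v₁ v₂ =>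
      deg (FreeMagma.mul u₁ u₂) < deg (FreeMagma.mul v₁ v₂) ∨
        (deg (FreeMagma.mul u₁ u₂) = deg (FreeMagma.mul v₁ v₂) ∧
          (wlt u₁ v₁ ∨ (u₁ = v₁ ∧ wlt u₂ v₂)))

/-- `u ≤ v` on nonassociative words. -/
def wle {X : Type*} [LinearOrder X] (u v : FreeMagma X) : Prop := wlt u v ∨ u = v

/-- A word is good if it contains no subword `(rs)t` with `s > t`. -/
def IsGood {X : Type*} [LinearOrder X] : FreeMagma X → Prop
  | .of _ => True
  | .mul (.of _) v => IsGood v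
  | .mul (.mul u₁ u₂) v =>
      IsGood (FreeMagma.mul u₁ u₂) ∧ IsGood v ∧ ¬ wlt v u₂

/-- Evaluation of a nonassociative word at values `x` in a magma `A`. -/
def evalWord {X A : Type*} [Mul A] (x : X → A) : FreeMagma X → A
  | .of a => x a
  | .mul u v => evalWord x u * evalWord x v

/-- Data exhibiting a nonunital nonassociative `k`-algebra `A` as the free right-symmetric
algebra `RS⟨x_1,…,x_n⟩`: `A` satisfies the right-symmetric identity and the images of the good
words form a `k`-linear basis (Segal's theorem). -/
structure FreeRSData (k : Type*) [Field k] (n : ℕ) (A : Type*)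
    [NonUnitalNonAssocRing A] [Module k A] where
  rightSymm : ∀ a b c : A, (a * b) * c - a * (b * c) = (a * c) * b - a * (c * b)
  x : Fin n → A
  basis : Module.Basis {w : FreeMagma (Fin n) // IsGood w} k A
  basis_eq : ∀ w : {w : FreeMagma (Fin n) // IsGood w}, basis w = evalWord x w.1

/-- `w` is the leading word of `f`: it is a good word occurring in the representation of `f`
in the basis of good words, and every other good word occurring there is smaller. -/
def IsLeadingWord {k : Type*} [Field k] {n : ℕ} {A : Type*} [NonUnitalNonAssocRing A]
    [Module k A] (D : FreeRSData k n A) (f : A) (w : FreeMagma (Fin n)) : Prop :=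
  ∃ hw : IsGood w,
    (⟨w, hw⟩ : {u : FreeMagma (Fin n) // IsGood u}) ∈ (D.basis.repr f).support ∧
      ∀ u ∈ (D.basis.repr f).support, u.1 ≠ w → wlt u.1 w

/-- The left-normed word `x R_{w_1} ⋯ R_{w_m} = (…((x w_1) w_2) … w_m)`. -/
def leftNormed {X : Type*} (a : FreeMagma X) (l : List (FreeMagma X)) : FreeMagma X :=
  l.foldl FreeMagma.mul a

/-- The degree of a word in the variable `a`. -/
def countVar {X : Type*} [DecidableEq X] (a : X) : FreeMagma X → ℕ
  | .of b => if b = a then 1 else 0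
  | .mul u v => countVar a u + countVar a v

/-- The two-sided ideal of the nonunital nonassociative `k`-algebra `A` generated by `f`. -/
def idealGen (k : Type*) [Field k] {A : Type*} [NonUnitalNonAssocRing A] [Module k A]
    (f : A) : Submodule k A :=
  sInf {I : Submodule k A | f ∈ I ∧ ∀ a : A, ∀ y ∈ I, a * y ∈ I ∧ y * a ∈ I}

/-- A pair of (nonzero) elements `f, g` is reducible if there is a good word `s` in a single
variable with `s(f̄) = ḡ` or `s(ḡ) = f̄`. -/
def Reducible {k : Type*} [Field k] {n : ℕ} {A : Type*} [NonUnitalNonAssocRing A]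
    [Module k A] (D : FreeRSData k n A) (f g : A) : Prop :=
  ∃ wf wg : FreeMagma (Fin n), IsLeadingWord D f wf ∧ IsLeadingWord D g wg ∧
    ∃ s : FreeMagma Unit, IsGood s ∧
      (evalWord (fun _ => wf) s = wg ∨ evalWord (fun _ => wg) s = wf)

/-- An elementary automorphism: it fixes all generators but one, which is sent to
`α x_i + f` with `α ≠ 0` and `f` in the subalgebra generated by the other generators. -/
def IsElementary {k : Type*} [Field k] {n : ℕ} {A : Type*} [NonUnitalNonAssocRing A]
    [Module k A] [SMulCommClass k A A] [IsScalarTower k A A]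
    (D : FreeRSData k n A) (e : A →ₙₐ[k] A) : Prop :=
  Function.Bijective e ∧ ∃ i : Fin n,
    (∀ j : Fin n, j ≠ i → e (D.x j) = D.x j) ∧
    ∃ (α : k) (f : A), α ≠ 0 ∧
      f ∈ NonUnitalAlgebra.adjoin k (D.x '' {j | j ≠ i}) ∧
      e (D.x i) = α • D.x i + f

section Order

variable {X : Type*}

@[simp] lemma deg_of (a : X) : deg (FreeMagma.of a) = 1 := rfl

@[simp] lemma deg_mul (u v : FreeMagma X) : deg (u * v) = deg u + deg v := rfl

lemma deg_pos : ∀ u : FreeMagma X, 0 < deg u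
  | .of _ => Nat.one_pos
  | .mul u _ => Nat.add_pos_left (deg_pos u) _

lemma finite_setOf_deg_le [Finite X] (d : ℕ) : {w : FreeMagma X | deg w ≤ d}.Finite := by
  induction d with
  | zero =>
    convert Set.finite_empty
    exact Set.eq_empty_of_forall_notMem fun w hw => (deg_pos w).not_ge hw
  | succ d ih =>
    refine ((Set.finite_range FreeMagma.of).union (ih.image2 (· * ·) ih)).subset ?_
    rintro (a | ⟨u, v⟩) hw
    · exact Or.inl ⟨a, rfl⟩
    · have := deg_pos u; have := deg_pos v
      simp only [Set.mem_ofPred_eq, FreeMagma.mul_eq, deg_mul] at hw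
      exact Or.inr ⟨u, by simp; omega, v, by simp; omega, rfl⟩

variable [LinearOrder X]

lemma wlt_irrefl : ∀ u : FreeMagma X, ¬ wlt u u
  | .of a => lt_irrefl a
  | .mul u v => by
      rintro (h | ⟨-, h | ⟨-, h⟩⟩)
      exacts [lt_irrefl _ h, wlt_irrefl u h, wlt_irrefl v h]

lemma wlt_trans : ∀ {u v w : FreeMagma X}, wlt u v → wlt v w → wlt u w
  | .of _, .of _, .of _, huv, hvw => lt_trans huv hvw
  | .of _, _, .mul _ _, _, _ => trivial
  | .mul _ _, .mul _ _, .mul _ _, huv, hvw => by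
      rcases huv with huv | ⟨hd, huv⟩ <;> rcases hvw with hvw | ⟨hd', hvw⟩
      · exact Or.inl (huv.trans hvw)
      · exact Or.inl (hd' ▸ huv)
      · exact Or.inl (hd ▸ hvw)
      refine Or.inr ⟨hd.trans hd', ?_⟩
      rcases huv with h₁ | ⟨rfl, h₂⟩ <;> rcases hvw with h₁' | ⟨rfl, h₂'⟩
      exacts [Or.inl (wlt_trans h₁ h₁'), Or.inl h₁, Or.inl h₁', Or.inr ⟨rfl, wlt_trans h₂ h₂'⟩]
  | .of _, .mul _ _, .of _, _, h => h.elim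
  | .mul _ _, .of _, _, h, _ => h.elim
  | .mul _ _, .mul _ _, .of _, _, h => h.elim

lemma wlt_trichotomy : ∀ u v : FreeMagma X, wlt u v ∨ u = v ∨ wlt v u
  | .of a, .of b => by
      rcases lt_trichotomy a b with h | rfl | h
      exacts [Or.inl h, Or.inr (Or.inl rfl), Or.inr (Or.inr h)]
  | .of _, .mul _ _ => Or.inl trivial
  | .mul _ _, .of _ => Or.inr (Or.inr trivial)
  | .mul u₁ u₂, .mul v₁ v₂ => by
      rcases Nat.lt_trichotomy (deg u₁ + deg u₂) (deg v₁ + deg v₂) with hd | hd | hd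
      · exact Or.inl (Or.inl hd)
      · rcases wlt_trichotomy u₁ v₁ with h₁ | rfl | h₁
        · exact Or.inl (Or.inr ⟨hd, Or.inl h₁⟩)
        · rcases wlt_trichotomy u₂ v₂ with h₂ | rfl | h₂
          · exact Or.inl (Or.inr ⟨hd, Or.inr ⟨rfl, h₂⟩⟩)
          · exact Or.inr (Or.inl rfl)
          · exact Or.inr (Or.inr (Or.inr ⟨hd.symm, Or.inr ⟨rfl, h₂⟩⟩))
        · exact Or.inr (Or.inr (Or.inr ⟨hd.symm, Or.inl h₁⟩))
      · exact Or.inr (Or.inr (Or.inl hd))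

noncomputable instance : LinearOrder (FreeMagma X) where
  le := wle
  lt := wlt
  le_refl _ := Or.inr rfl
  le_trans u v w := by
    rintro (huv | rfl) (hvw | rfl)
    exacts [Or.inl (wlt_trans huv hvw), Or.inl huv, Or.inl hvw, Or.inr rfl]
  le_antisymm u v := by
    rintro (huv | rfl) (hvu | hvu)
    exacts [(wlt_irrefl u (wlt_trans huv hvu)).elim, hvu.symm, rfl, rfl]
  le_total u v := by
    rcases wlt_trichotomy u v with h | rfl | h
    exacts [Or.inl (Or.inl h), Or.inl (Or.inr rfl), Or.inr (Or.inl h)]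
  lt_iff_le_not_ge u v := by
    constructor
    · refine fun h => ⟨Or.inl h, ?_⟩
      rintro (h' | rfl)
      exacts [wlt_irrefl _ (wlt_trans h h'), wlt_irrefl _ h]
    · rintro ⟨h | rfl, h'⟩
      exacts [h, (h' (Or.inr rfl)).elim]
  toDecidableLE := Classical.decRel _

lemma mul_lt_mul_iff {u₁ u₂ v₁ v₂ : FreeMagma X} :
    u₁ * u₂ < v₁ * v₂ ↔ deg u₁ + deg u₂ < deg v₁ + deg v₂ ∨
      deg u₁ + deg u₂ = deg v₁ + deg v₂ ∧ (u₁ < v₁ ∨ u₁ = v₁ ∧ u₂ < v₂) := Iff.rfl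

lemma lt_of_deg_lt {u v : FreeMagma X} (h : deg u < deg v) : u < v := by
  cases u <;> cases v
  · exact absurd h (lt_irrefl 1)
  · exact trivial
  · rename_i u₁ u₂ _
    have := deg_pos u₁; have := deg_pos u₂
    simp only [FreeMagma.mul_eq, deg_mul, deg_of] at h; omega
  · exact Or.inl h

lemma deg_le_of_le {u v : FreeMagma X} (h : u ≤ v) : deg u ≤ deg v :=
  not_lt.1 fun hd => (lt_of_deg_lt hd).not_ge h

lemma mul_lt_mul_of_lt_left {u₁ u₂ v₁ v₂ : FreeMagma X} (h : u₁ < v₁)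
    (hd : deg u₁ + deg u₂ ≤ deg v₁ + deg v₂) : u₁ * u₂ < v₁ * v₂ :=
  hd.lt_or_eq.elim Or.inl fun hd => Or.inr ⟨hd, Or.inl h⟩

lemma mul_lt_mul_of_lt_right (u : FreeMagma X) {v v' : FreeMagma X} (h : v < v') :
    u * v < u * v' :=
  (deg_le_of_le h.le).lt_or_eq.elim (fun hd => lt_of_deg_lt (by simpa using hd))
    fun hd => Or.inr ⟨by simp only [FreeMagma.mul_eq, deg_mul, hd], Or.inr ⟨rfl, h⟩⟩

lemma mul_lt_mul_of_le_of_lt {u₁ u₂ v₁ v₂ : FreeMagma X} (h₁ : u₁ ≤ v₁) (h₂ : u₂ < v₂)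
    (hd : deg u₁ + deg u₂ ≤ deg v₁ + deg v₂) : u₁ * u₂ < v₁ * v₂ :=
  h₁.lt_or_eq.elim (fun h₁ => mul_lt_mul_of_lt_left h₁ hd)
    fun h₁ => h₁ ▸ mul_lt_mul_of_lt_right _ h₂

instance [Finite X] : WellFoundedLT (FreeMagma X) := by
  refine ⟨⟨fun w => ?_⟩⟩
  have : Finite {u : FreeMagma X // deg u ≤ deg w} := finite_setOf_deg_le (deg w)
  have hwf := (Finite.wellFounded_of_trans_of_irrefl
    (α := {u : FreeMagma X // deg u ≤ deg w}) (· < ·)).apply ⟨w, le_rfl⟩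
  suffices ∀ u : {u : FreeMagma X // deg u ≤ deg w}, Acc (· < ·) u → Acc (· < ·) u.1 from
    this _ hwf
  intro u hu
  induction hu with
  | intro u _ ih =>
    exact ⟨_, fun v hv => ih ⟨v, (deg_le_of_le (le_of_lt hv)).trans u.2⟩ hv⟩

end Order

section LeadMul

variable {X : Type*} [LinearOrder X]

lemma isGood_mul_mul_iff (u₁ u₂ v : FreeMagma X) :
    IsGood (u₁ * u₂ * v) ↔ IsGood (u₁ * u₂) ∧ IsGood v ∧ ¬ v < u₂ := Iff.rfl

lemma IsGood.left : ∀ {u v : FreeMagma X}, IsGood (u * v) → IsGood u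
  | .of _, _, _ => trivial
  | .mul _ _, _, h => h.1

lemma IsGood.right : ∀ {u v : FreeMagma X}, IsGood (u * v) → IsGood v
  | .of _, _, h => h
  | .mul _ _, _, h => h.2.1

/-- The leading good word `u ∘ v` of the product of good words `u` and `v`: the right-symmetric
identity `(u₁u₂)v = (u₁v)u₂ + u₁(u₂v) - u₁(vu₂)` rewrites the bad word `(u₁u₂)v`, `v < u₂`. -/
noncomputable def leadMul : FreeMagma X → FreeMagma X → FreeMagma X
  | .of a, v => FreeMagma.of a * v
  | .mul u₁ u₂, v => if v < u₂ then leadMul u₁ v * u₂ else u₁ * u₂ * v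

@[simp] lemma leadMul_of (a : X) (v : FreeMagma X) :
    leadMul (FreeMagma.of a) v = FreeMagma.of a * v := rfl

lemma leadMul_mul_of_lt {u₁ u₂ v : FreeMagma X} (h : v < u₂) :
    leadMul (u₁ * u₂) v = leadMul u₁ v * u₂ := if_pos h

lemma leadMul_mul_of_not_lt {u₁ u₂ v : FreeMagma X} (h : ¬ v < u₂) :
    leadMul (u₁ * u₂) v = u₁ * u₂ * v := if_neg h

lemma leadMul_eq_mul {u v : FreeMagma X} (h : IsGood (u * v)) : leadMul u v = u * v := by
  cases u
  · rfl
  · exact leadMul_mul_of_not_lt h.2.2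

@[simp] lemma deg_leadMul : ∀ u v : FreeMagma X, deg (leadMul u v) = deg u + deg v
  | .of _, _ => rfl
  | .mul u₁ u₂, v => by
      by_cases h : v < u₂
      · rw [FreeMagma.mul_eq, leadMul_mul_of_lt h, deg_mul, deg_leadMul u₁ v]; simp; omega
      · rw [FreeMagma.mul_eq, leadMul_mul_of_not_lt h]; rfl

lemma exists_leadMul_eq_mul (u v : FreeMagma X) :
    ∃ p q, leadMul u v = p * q ∧ (q = v ∨ (∃ r, u = r * q) ∧ v < q) := by
  cases u with
  | of a => exact ⟨_, _, rfl, Or.inl rfl⟩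
  | mul u₁ u₂ =>
    by_cases h : v < u₂
    · exact ⟨_, _, leadMul_mul_of_lt h, Or.inr ⟨⟨u₁, rfl⟩, h⟩⟩
    · exact ⟨_, _, leadMul_mul_of_not_lt h, Or.inl rfl⟩

lemma isGood_leadMul : ∀ {u v : FreeMagma X}, IsGood u → IsGood v → IsGood (leadMul u v)
  | .of _, _, _, hv => hv
  | .mul u₁ u₂, v, hu, hv => by
      by_cases h : v < u₂
      · rw [FreeMagma.mul_eq, leadMul_mul_of_lt h]
        obtain ⟨p, q, hpq, hq⟩ := exists_leadMul_eq_mul u₁ v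
        have hgood := isGood_leadMul hu.left hv
        rw [hpq] at hgood ⊢
        refine (isGood_mul_mul_iff p q u₂).2 ⟨hgood, hu.right, ?_⟩
        rcases hq with rfl | ⟨⟨r, rfl⟩, -⟩
        exacts [not_lt_of_gt h, hu.2.2]
      · rw [FreeMagma.mul_eq, leadMul_mul_of_not_lt h]
        exact ⟨hu, hv, h⟩

lemma leadMul_le_mul : ∀ u v : FreeMagma X, leadMul u v ≤ u * v
  | .of _, _ => le_rfl
  | .mul u₁ u₂, v => by
      by_cases h : v < u₂
      · rw [FreeMagma.mul_eq, leadMul_mul_of_lt h]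
        refine (mul_lt_mul_of_lt_left ?_ (by simp; omega)).le
        exact (leadMul_le_mul u₁ v).trans_lt (mul_lt_mul_of_lt_right u₁ h)
      · rw [FreeMagma.mul_eq, leadMul_mul_of_not_lt h]

lemma strictMono_leadMul : ∀ u : FreeMagma X, StrictMono (leadMul u)
  | .of _ => fun _ _ h => mul_lt_mul_of_lt_right _ h
  | .mul u₁ u₂ => fun v' v h => by
      have hdv := deg_le_of_le h.le
      simp only [FreeMagma.mul_eq]
      by_cases hv : v < u₂
      · rw [leadMul_mul_of_lt hv, leadMul_mul_of_lt (h.trans hv)]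
        exact mul_lt_mul_of_lt_left (strictMono_leadMul u₁ h) (by simp; omega)
      rw [leadMul_mul_of_not_lt hv]
      by_cases hv' : v' < u₂
      · rw [leadMul_mul_of_lt hv']
        refine mul_lt_mul_of_lt_left ?_ (by simp; omega)
        exact (leadMul_le_mul u₁ v').trans_lt (mul_lt_mul_of_lt_right u₁ hv')
      · rw [leadMul_mul_of_not_lt hv']
        exact mul_lt_mul_of_lt_right _ h

lemma leadMul_lt_leadMul_left (v : FreeMagma X) :
    ∀ {u' u : FreeMagma X}, IsGood u' → u' < u → leadMul u' v < leadMul u v := by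
  intro u' u hu' h
  obtain hd | hd := (deg_le_of_le h.le).lt_or_eq
  · exact lt_of_deg_lt (by simp; omega)
  induction u generalizing u' with
  | ih1 a =>
    cases u' with
    | of b => exact mul_lt_mul_of_lt_left h le_rfl
    | mul p q => have := deg_pos p; have := deg_pos q; simp at hd; omega
  | ih2 u₁ u₂ ih₁ _ =>
    cases u' with
    | of b => have := deg_pos u₁; have := deg_pos u₂; simp at hd; omega
    | mul u₁' u₂' =>
      simp only [FreeMagma.mul_eq, deg_mul] at *
      have ih : u₁' < u₁ → leadMul u₁' v < leadMul u₁ v := fun h₁ =>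
        (deg_le_of_le h₁.le).lt_or_eq.elim (fun hd₁ => lt_of_deg_lt (by simp; omega))
          (ih₁ hu'.left h₁)
      by_cases hv : v < u₂ <;> by_cases hv' : v < u₂'
      · rw [leadMul_mul_of_lt hv, leadMul_mul_of_lt hv']
        rcases mul_lt_mul_iff.1 h with hlt | ⟨-, hlt | ⟨rfl, h₂⟩⟩
        · exact absurd hd hlt.ne
        · exact mul_lt_mul_of_lt_left (ih hlt) (by simp; omega)
        · exact mul_lt_mul_of_lt_right _ h₂
      · rw [leadMul_mul_of_lt hv, leadMul_mul_of_not_lt hv']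
        have h₁ : u₁' ≤ u₁ := by
          rcases mul_lt_mul_iff.1 h with hlt | ⟨-, hlt | ⟨heq, -⟩⟩
          exacts [absurd hd hlt.ne, hlt.le, heq.le]
        have hle : u₁' * u₂' ≤ leadMul u₁ v := calc
          u₁' * u₂' = leadMul u₁' u₂' := (leadMul_eq_mul hu').symm
          _ ≤ leadMul u₁' v := (strictMono_leadMul u₁').monotone (not_lt.1 hv')
          _ ≤ leadMul u₁ v := h₁.lt_or_eq.elim (fun h₁ => (ih h₁).le) fun h₁ => h₁ ▸ le_rfl
        exact mul_lt_mul_of_le_of_lt hle hv (by simp; omega)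
      · rw [leadMul_mul_of_not_lt hv, leadMul_mul_of_lt hv']
        refine mul_lt_mul_of_lt_left ?_ (by simp; omega)
        exact (leadMul_le_mul u₁' v).trans_lt ((mul_lt_mul_of_lt_right u₁' hv').trans h)
      · rw [leadMul_mul_of_not_lt hv, leadMul_mul_of_not_lt hv']
        exact mul_lt_mul_of_lt_left h (by simp; omega)

lemma leadMul_lt_leadMul {u' u v' v : FreeMagma X} (hu' : IsGood u') (hu : u' ≤ u) (hv : v' ≤ v)
    (hne : u' ≠ u ∨ v' ≠ v) : leadMul u' v' < leadMul u v := by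
  rcases hu.lt_or_eq with hu | rfl
  · exact ((strictMono_leadMul u').monotone hv).trans_lt (leadMul_lt_leadMul_left v hu' hu)
  · exact strictMono_leadMul u' (hv.lt_of_ne (hne.resolve_left (not_not.2 rfl)))

lemma mul_lt_of_lt_leadMul {u₁ u₂ v z : FreeMagma X} (hb : v < u₂) (hz : z < leadMul u₁ v) :
    z * u₂ < u₁ * u₂ * v := by
  have hdz := deg_le_of_le hz.le
  refine mul_lt_mul_of_lt_left ?_ (by simp at hdz ⊢; omega)
  obtain hd | hd := (deg_le_of_le hb.le).lt_or_eq
  · exact lt_of_deg_lt (by simp at hdz ⊢; omega)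
  · exact hz.trans_le ((leadMul_le_mul u₁ v).trans (mul_lt_mul_of_lt_right u₁ hb).le)

lemma mul_lt_of_deg_le {u₁ u₂ v z : FreeMagma X} (hz : deg z ≤ deg u₂ + deg v) :
    u₁ * z < u₁ * u₂ * v ∧ u₁ * z < leadMul u₁ v * u₂ := by
  have := deg_pos u₂; have := deg_pos v
  exact ⟨mul_lt_mul_of_lt_left (lt_of_deg_lt (by simp; omega)) (by simp; omega),
    mul_lt_mul_of_lt_left (lt_of_deg_lt (by simp; omega)) (by simp; omega)⟩

lemma exists_leadMul_eq_mul_deg (u v : FreeMagma X) :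
    ∃ p q, leadMul u v = p * q ∧ (q = v ∨ deg q < deg u ∧ deg v ≤ deg q) := by
  obtain ⟨p, q, h, hq⟩ := exists_leadMul_eq_mul u v
  refine ⟨p, q, h, hq.imp_right ?_⟩
  rintro ⟨⟨r, rfl⟩, hlt⟩
  exact ⟨by simp [deg_pos r], deg_le_of_le hlt.le⟩

lemma eq_of_leadMul_eq_leadMul {u v : FreeMagma X} (h : leadMul u v = leadMul v u) : u = v := by
  obtain ⟨p, q, huv, hq⟩ := exists_leadMul_eq_mul_deg u v
  obtain ⟨p', q', hvu, hq'⟩ := exists_leadMul_eq_mul_deg v u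
  rw [h, hvu] at huv
  injection huv with _ hqq
  subst hqq
  rcases hq with rfl | hq <;> rcases hq' with rfl | hq'
  · rfl
  all_goals omega

end LeadMul

section Algebra

lemma mul_mem_of_mem_span {k A : Type*} [Field k] [NonUnitalNonAssocRing A] [Module k A]
    [SMulCommClass k A A] [IsScalarTower k A A] {S T : Set A} {P : Submodule k A}
    (h : ∀ s ∈ S, ∀ t ∈ T, s * t ∈ P) {x y : A} (hx : x ∈ Submodule.span k S)
    (hy : y ∈ Submodule.span k T) : x * y ∈ P := by
  have : Submodule.map₂ (LinearMap.mul k A) (Submodule.span k S) (Submodule.span k T) ≤ P := by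
    rw [Submodule.map₂_span_span, Submodule.span_le]
    rintro _ ⟨s, hs, t, ht, rfl⟩
    exact h s hs t ht
  exact this (Submodule.apply_mem_map₂ _ hx hy)

lemma evalWord_mul {X A : Type*} [Mul A] (x : X → A) (u v : FreeMagma X) :
    evalWord x (u * v) = evalWord x u * evalWord x v := rfl

variable {k : Type*} [Field k] {A : Type*} [NonUnitalNonAssocRing A] [Module k A] {n : ℕ}
  (D : FreeRSData k n A)

def below (w : FreeMagma (Fin n)) : Submodule k A :=
  Submodule.span k (D.basis '' {z | z.1 < w})

variable {D}

lemma mem_below_iff {w : FreeMagma (Fin n)} {x : A} :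
    x ∈ below D w ↔ ∀ z, D.basis.repr x z ≠ 0 → z.1 < w := by
  simp [below, Module.Basis.mem_span_image, Set.subset_def]

lemma below_mono {w w' : FreeMagma (Fin n)} (h : w ≤ w') : below D w ≤ below D w' :=
  Submodule.span_mono (Set.image_mono fun _ hz => lt_of_lt_of_le hz h)

lemma evalWord_mem_below {z w : FreeMagma (Fin n)} (hz : IsGood z) (h : z < w) :
    evalWord D.x z ∈ below D w :=
  D.basis_eq ⟨z, hz⟩ ▸ Submodule.subset_span ⟨⟨z, hz⟩, h, rfl⟩

variable (D) in
def MulLead (u v : FreeMagma (Fin n)) : Prop :=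
  evalWord D.x u * evalWord D.x v - evalWord D.x (leadMul u v) ∈ below D (leadMul u v)

lemma MulLead.mul_mem_below {u v w : FreeMagma (Fin n)} (h : MulLead D u v) (hu : IsGood u)
    (hv : IsGood v) (hw : leadMul u v < w) : evalWord D.x u * evalWord D.x v ∈ below D w := by
  simpa using add_mem (below_mono hw.le h) (evalWord_mem_below (isGood_leadMul hu hv) hw)

variable [SMulCommClass k A A] [IsScalarTower k A A]

lemma mul_mem_of_mem_below {w w' : FreeMagma (Fin n)} {P : Submodule k A}
    (h : ∀ z z' : {u // IsGood u}, z.1 < w → z'.1 < w' → evalWord D.x z * evalWord D.x z' ∈ P)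
    {x y : A} (hx : x ∈ below D w) (hy : y ∈ below D w') : x * y ∈ P := by
  refine mul_mem_of_mem_span ?_ hx hy
  rintro _ ⟨z, hz, rfl⟩ _ ⟨z', hz', rfl⟩
  rw [D.basis_eq, D.basis_eq]
  exact h z z' hz hz'

lemma mul_mem_of_mem_below_left {w : FreeMagma (Fin n)} {P : Submodule k A} {y : A}
    (h : ∀ z : {u // IsGood u}, z.1 < w → evalWord D.x z * y ∈ P)
    {x : A} (hx : x ∈ below D w) : x * y ∈ P := by
  refine mul_mem_of_mem_span (T := {y}) ?_ hx (Submodule.mem_span_singleton_self y)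
  rintro _ ⟨z, hz, rfl⟩ _ rfl
  rw [D.basis_eq]
  exact h z hz

lemma mul_mem_of_mem_below_right {w : FreeMagma (Fin n)} {P : Submodule k A} {x : A}
    (h : ∀ z : {u // IsGood u}, z.1 < w → x * evalWord D.x z ∈ P)
    {y : A} (hy : y ∈ below D w) : x * y ∈ P := by
  refine mul_mem_of_mem_span (S := {x}) ?_ (Submodule.mem_span_singleton_self x) hy
  rintro _ rfl _ ⟨z, hz, rfl⟩
  rw [D.basis_eq]
  exact h z hz

end Algebra

section MulLead

variable {k : Type*} [Field k] {A : Type*} [NonUnitalNonAssocRing A] [Module k A]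
  [SMulCommClass k A A] [IsScalarTower k A A] {n : ℕ} {D : FreeRSData k n A}

/-- Expand the bad word `(u₁u₂)v`, `v < u₂`, by the right-symmetric identity. -/
lemma mulLead_mul_of_lt {u₁ u₂ v : FreeMagma (Fin n)} (hu : IsGood (u₁ * u₂)) (hv : IsGood v)
    (hb : v < u₂)
    (ih : ∀ z t, IsGood z → IsGood t → z * t < u₁ * u₂ * v → MulLead D z t) :
    MulLead D (u₁ * u₂) v := by
  set W := leadMul u₁ v * u₂
  have hW : leadMul (u₁ * u₂) v = W := leadMul_mul_of_lt hb
  have hu₁ := hu.left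
  have hu₂ := hu.right
  set a := evalWord D.x u₁
  set b := evalWord D.x u₂
  set c := evalWord D.x v
  have hmul_word : ∀ z : {u // IsGood u}, deg z.1 ≤ deg u₂ + deg v →
      a * evalWord D.x z ∈ below D W :=
    fun z hz => (ih u₁ z hu₁ z.2 (mul_lt_of_deg_le hz).1).mul_mem_below hu₁ z.2
      ((leadMul_le_mul u₁ z).trans_lt (mul_lt_of_deg_le hz).2)
  have hmul_lead : ∀ t : {u // IsGood u}, deg t.1 = deg u₂ + deg v →
      ∀ y, y - evalWord D.x t.1 ∈ below D t.1 → a * y ∈ below D W := by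
    intro t ht y hy
    rw [← sub_add_cancel y (evalWord D.x t.1), mul_add]
    refine add_mem (mul_mem_of_mem_below_right (fun z hz => hmul_word z ?_) hy)
      (hmul_word t ht.le)
    exact ht ▸ deg_le_of_le hz.le
  have h₁ : (a * c) * b - evalWord D.x W ∈ below D W := by
    have : (a * c) * b - evalWord D.x W = (a * c - evalWord D.x (leadMul u₁ v)) * b := by
      rw [sub_mul]; rfl
    rw [this]
    refine mul_mem_of_mem_below_left (fun z hz => ?_) (ih u₁ v hu₁ hv ?_)
    · refine (ih z u₂ z.2 hu₂ (mul_lt_of_lt_leadMul hb hz)).mul_mem_below z.2 hu₂ ?_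
      have hWgood : IsGood W := hW ▸ isGood_leadMul hu hv
      exact (leadMul_lt_leadMul_left u₂ z.2 hz).trans_eq (leadMul_eq_mul hWgood)
    · exact lt_of_deg_lt (by have := deg_pos u₂; simp; omega)
  have h₂ : a * (b * c) ∈ below D W :=
    hmul_lead ⟨_, isGood_leadMul hu₂ hv⟩ (deg_leadMul u₂ v) _
      (ih u₂ v hu₂ hv (lt_of_deg_lt (by have := deg_pos u₁; simp; omega)))
  have h₃ : a * (c * b) ∈ below D W :=
    hmul_lead ⟨_, isGood_leadMul hv hu₂⟩ (by simp [add_comm]) _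
      (ih v u₂ hv hu₂ (lt_of_deg_lt (by have := deg_pos u₁; simp; omega)))
  have hrs : (a * b) * c - evalWord D.x W
      = ((a * c) * b - evalWord D.x W) + a * (b * c) - a * (c * b) := by
    rw [sub_eq_iff_eq_add.1 (D.rightSymm a b c)]; abel
  show (a * b) * c - evalWord D.x (leadMul (u₁ * u₂) v) ∈ below D (leadMul (u₁ * u₂) v)
  rw [hW, hrs]
  exact sub_mem (add_mem h₁ h₂) h₃

lemma mulLead {u v : FreeMagma (Fin n)} (hu : IsGood u) (hv : IsGood v) : MulLead D u v := by
  suffices ∀ m u v, u * v = m → IsGood u → IsGood v → MulLead D u v from this _ u v rfl hu hv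
  intro m
  induction m using WellFoundedLT.induction with
  | _ m ih =>
  rintro u v rfl hu hv
  cases u with
  | of a => simp [MulLead, evalWord_mul]
  | mul u₁ u₂ =>
    by_cases hb : v < u₂
    · exact mulLead_mul_of_lt hu hv hb fun z t hz ht h => ih _ h z t rfl hz ht
    · simp [MulLead, FreeMagma.mul_eq, leadMul_mul_of_not_lt hb, evalWord_mul]

end MulLead

section LeadingWord

variable {k : Type*} [Field k] {A : Type*} [NonUnitalNonAssocRing A] [Module k A] {n : ℕ}
  {D : FreeRSData k n A}

lemma exists_isLeadingWord {f : A} (hf : f ≠ 0) : ∃ w, IsLeadingWord D f w := by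
  have hne : (D.basis.repr f).support.Nonempty :=
    Finsupp.support_nonempty_iff.2 (by simpa using hf)
  exact ⟨_, (Finset.max' _ hne).2, Finset.max'_mem _ hne,
    fun u hu hne' => lt_of_le_of_ne (Subtype.coe_le_coe.2 (Finset.le_max' _ _ hu)) hne'⟩

lemma IsLeadingWord.unique {f : A} {w w' : FreeMagma (Fin n)} (h : IsLeadingWord D f w)
    (h' : IsLeadingWord D f w') : w = w' := by
  obtain ⟨_, hmem, hmax⟩ := h
  obtain ⟨_, hmem', hmax'⟩ := h'
  by_contra hne
  exact lt_asymm (α := FreeMagma (Fin n)) (hmax _ hmem' (Ne.symm hne)) (hmax' _ hmem hne)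

lemma repr_sub_smul_evalWord_apply {w : FreeMagma (Fin n)} (hw : IsGood w) (f : A) (c : k)
    (z : {u // IsGood u}) :
    D.basis.repr (f - c • evalWord D.x w) z = D.basis.repr f z - if z = ⟨w, hw⟩ then c else 0 := by
  rw [← D.basis_eq ⟨w, hw⟩]
  simp [Finsupp.single_apply, eq_comm]

lemma IsLeadingWord.exists_sub_smul_mem_below {f : A} {w : FreeMagma (Fin n)}
    (h : IsLeadingWord D f w) : ∃ c : k, c ≠ 0 ∧ f - c • evalWord D.x w ∈ below D w := by
  obtain ⟨hw, hmem, hmax⟩ := h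
  refine ⟨_, Finsupp.mem_support_iff.1 hmem, mem_below_iff.2 fun z hz => ?_⟩
  rw [repr_sub_smul_evalWord_apply hw] at hz
  by_cases hzw : z = ⟨w, hw⟩
  · simp [hzw] at hz
  · rw [if_neg hzw, sub_zero] at hz
    exact hmax z (Finsupp.mem_support_iff.2 hz) fun h => hzw (Subtype.ext h)

lemma isLeadingWord_of_sub_smul_mem_below {f : A} {w : FreeMagma (Fin n)} {c : k}
    (hw : IsGood w) (hc : c ≠ 0) (h : f - c • evalWord D.x w ∈ below D w) :
    IsLeadingWord D f w := by
  have hcoeff := fun z => mt (mem_below_iff.1 h z)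
  refine ⟨hw, ?_, fun z hz hzw => ?_⟩
  · have := hcoeff ⟨w, hw⟩ (lt_irrefl w)
    rw [repr_sub_smul_evalWord_apply hw, if_pos rfl, not_not, sub_eq_zero] at this
    exact Finsupp.mem_support_iff.2 (this ▸ hc)
  · by_contra hlt
    have := hcoeff z hlt
    rw [repr_sub_smul_evalWord_apply hw, if_neg fun h => hzw (congrArg Subtype.val h),
      sub_zero, not_not] at this
    exact Finsupp.mem_support_iff.1 hz this

variable [SMulCommClass k A A] [IsScalarTower k A A]

lemma IsLeadingWord.mul {f g : A} {wf wg : FreeMagma (Fin n)} (hf : IsLeadingWord D f wf)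
    (hg : IsLeadingWord D g wg) : IsLeadingWord D (f * g) (leadMul wf wg) := by
  have hwf := hf.1
  have hwg := hg.1
  obtain ⟨cf, hcf, hF⟩ := hf.exists_sub_smul_mem_below
  obtain ⟨cg, hcg, hG⟩ := hg.exists_sub_smul_mem_below
  refine isLeadingWord_of_sub_smul_mem_below (isGood_leadMul hwf hwg) (mul_ne_zero hcf hcg) ?_
  set W := leadMul wf wg
  set F := evalWord D.x wf
  set G := evalWord D.x wg
  obtain ⟨F₂, hF₂, rfl⟩ : ∃ F₂ ∈ below D wf, f = cf • F + F₂ := ⟨_, hF, by abel⟩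
  obtain ⟨G₂, hG₂, rfl⟩ : ∃ G₂ ∈ below D wg, g = cg • G + G₂ := ⟨_, hG, by abel⟩
  have hsmall : ∀ z z' : {u // IsGood u}, z.1 ≤ wf → z'.1 ≤ wg → (z.1 ≠ wf ∨ z'.1 ≠ wg) →
      evalWord D.x z * evalWord D.x z' ∈ below D W := fun z z' h h' hne =>
    (mulLead z.2 z'.2).mul_mem_below z.2 z'.2 (leadMul_lt_leadMul z.2 h h' hne)
  have hexpand : (cf • F + F₂) * (cg • G + G₂) - (cf * cg) • evalWord D.x W =
      (cf * cg) • (F * G - evalWord D.x W) + cf • (F * G₂) + cg • (F₂ * G) + F₂ * G₂ := by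
    simp only [add_mul, mul_add, smul_mul_assoc, mul_smul_comm]
    module
  rw [hexpand]
  refine add_mem (add_mem (add_mem (Submodule.smul_mem _ _ (mulLead hwf hwg)) ?_) ?_) ?_
  · refine Submodule.smul_mem _ _ (mul_mem_of_mem_below_right (fun z hz => ?_) hG₂)
    exact hsmall ⟨wf, hwf⟩ z le_rfl hz.le (Or.inr hz.ne)
  · refine Submodule.smul_mem _ _ (mul_mem_of_mem_below_left (fun z hz => ?_) hF₂)
    exact hsmall z ⟨wg, hwg⟩ hz.le le_rfl (Or.inl hz.ne)
  · exact mul_mem_of_mem_below (fun z z' hz hz' => hsmall z z' hz.le hz'.le (Or.inl hz.ne)) hF₂ hG₂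

lemma IsLeadingWord.eq_of_mul_comm {f g : A} {wf wg : FreeMagma (Fin n)}
    (hf : IsLeadingWord D f wf) (hg : IsLeadingWord D g wg) (h : f * g = g * f) : wf = wg :=
  eq_of_leadMul_eq_leadMul ((hf.mul hg).unique (h ▸ hg.mul hf))

theorem exists_eq_smul_of_mul_comm (D : FreeRSData k n A) {f g : A} (hf : f ≠ 0)
    (h : f * g = g * f) : ∃ c : k, g = c • f := by
  obtain ⟨w, hlead⟩ := exists_isLeadingWord (D := D) hf
  obtain ⟨hw, hmem, -⟩ := id hlead
  set c := D.basis.repr g ⟨w, hw⟩ / D.basis.repr f ⟨w, hw⟩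
  refine ⟨c, sub_eq_zero.1 (by_contra fun hne => ?_)⟩
  obtain ⟨w', hlead'⟩ := exists_isLeadingWord (D := D) hne
  have hcomm : f * (g - c • f) = (g - c • f) * f := by
    rw [mul_sub, sub_mul, mul_smul_comm, smul_mul_assoc, h]
  obtain rfl := hlead.eq_of_mul_comm hlead' hcomm
  apply Finsupp.mem_support_iff.1 hlead'.2.1
  simp [c, div_mul_cancel₀ _ (Finsupp.mem_support_iff.1 hmem)]

end LeadingWord

/-- Corollary 2.9: if nonzero elements `f, g` of the free right-symmetric
algebra commute, then `g = c f` for some `c ∈ k`; consequently the centralizer of any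
nonzero `f` is the one-dimensional subspace `k f`. -/
theorem statement8 (k : Type*) [Field k] (n : ℕ) (A : Type*) [NonUnitalNonAssocRing A]
    [Module k A] [SMulCommClass k A A] [IsScalarTower k A A]
    (D : FreeRSData k n A) :
    (∀ f g : A, f ≠ 0 → g ≠ 0 → f * g = g * f → ∃ c : k, g = c • f) ∧
    (∀ f : A, f ≠ 0 → {g : A | f * g = g * f} = Set.range fun c : k => c • f) := by
  refine ⟨fun f g hf _ h => exists_eq_smul_of_mul_comm D hf h, fun f hf => ?_⟩
  ext g
  constructor
  · intro h
    obtain ⟨c, rfl⟩ := exists_eq_smul_of_mul_comm D hf h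
    exact ⟨c, rfl⟩
  · rintro ⟨c, rfl⟩
    exact (mul_smul_comm c f f).trans (smul_mul_assoc c f f).symm

end RS
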